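/- arXiv:2402.07248 — 5 statements merged into one kernel-verified Lean document; each statement's English description precedes it below -/
import Mathlib

section
/- For all integers $D_i \geq 1$, $d_i \geq 0$, and $D \geq 4$ divisible by 4, we have $\frac{(D_i+d_i)!}{D_i!} \leq \left(1+\frac{4d_i}{D}\right)^{D_i - D/4} \cdot \frac{(D/4+d_i)!}{(D/4)!}$. -/
/-!
With `Q = D / 4`, consecutive terms of `n ↦ (n + d)! / n!` have ratio `1 + d / (n + 1)`, which
decreases in `n`. Walking up from `Q`, each step multiplies by at most `1 + d / Q`; walking down
to `Q`, each step multiplies by at least `1 + d / Q`. Either way the sequence stays below the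
geometric sequence with ratio `1 + d / Q = 1 + 4d / D` through its `Q`-th term.
-/

open Nat

theorem le_zpow_sub_mul_of_ratio_bounds {f : ℕ → ℝ} {r : ℝ} {Q : ℕ} (hr : 0 < r)
    (hup : ∀ m, Q ≤ m → f (m + 1) ≤ r * f m) (hdown : ∀ m < Q, r * f m ≤ f (m + 1)) (n : ℕ) :
    f n ≤ r ^ ((n : ℤ) - Q) * f Q := by
  rcases le_total Q n with hQn | hnQ
  · induction n, hQn using Nat.le_induction with
    | base => simp
    | succ m hQm ih =>
      calc f (m + 1) ≤ r * f m := hup m hQm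
        _ ≤ r * (r ^ ((m : ℤ) - Q) * f Q) := by gcongr
        _ = r ^ (((m + 1 : ℕ) : ℤ) - Q) * f Q := by
          rw [← mul_assoc, ← zpow_one_add₀ hr.ne']; push_cast; ring_nf
  · induction hnQ using Nat.decreasingInduction with
    | self => simp
    | of_succ m hmQ ih =>
      calc f m ≤ r⁻¹ * f (m + 1) := by
            rw [inv_mul_eq_div, le_div_iff₀' hr]; exact hdown m hmQ
        _ ≤ r⁻¹ * (r ^ (((m + 1 : ℕ) : ℤ) - Q) * f Q) := by gcongr
        _ = r ^ ((m : ℤ) - Q) * f Q := by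
          rw [← mul_assoc, ← zpow_neg_one, ← zpow_add₀ hr.ne']; push_cast; ring_nf

theorem factorial_add_div_factorial_succ (n d : ℕ) :
    ((n + 1 + d)! : ℝ) / (n + 1)! = (1 + d / (n + 1)) * ((n + d)! / n !) := by
  rw [show n + 1 + d = n + d + 1 by ring, factorial_succ, factorial_succ]
  push_cast
  field_simp
  ring

theorem factorial_add_div_factorial_le (d Q n : ℕ) (hQ : 0 < Q) :
    ((n + d)! : ℝ) / n ! ≤ (1 + d / Q) ^ ((n : ℤ) - Q) * ((Q + d)! / Q !) := by
  have hQ' : (0 : ℝ) < Q := by exact_mod_cast hQ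
  refine le_zpow_sub_mul_of_ratio_bounds (f := fun n ↦ ((n + d)! : ℝ) / n !) (by positivity)
    (fun m hQm ↦ ?_) (fun m hmQ ↦ ?_) n
  · rw [factorial_add_div_factorial_succ]
    gcongr
    exact_mod_cast hQm.trans m.le_succ
  · rw [factorial_add_div_factorial_succ]
    gcongr
    exact_mod_cast hmQ

theorem stmt1_general (D Di di : ℕ) (hD : 4 ≤ D) (hD4 : 4 ∣ D) :
    ((Di + di).factorial : ℝ) / (Di.factorial : ℝ) ≤
      (1 + 4 * (di : ℝ) / (D : ℝ)) ^ ((Di : ℝ) - (D : ℝ) / 4) *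
        (((D / 4 + di).factorial : ℝ) / ((D / 4).factorial : ℝ)) := by
  obtain ⟨Q, rfl⟩ := hD4
  have hQ : 0 < Q := by omega
  have hbase : 1 + 4 * (di : ℝ) / ((4 * Q : ℕ) : ℝ) = 1 + di / Q := by
    push_cast; field_simp
  have hexp : (Di : ℝ) - ((4 * Q : ℕ) : ℝ) / 4 = (((Di : ℤ) - Q : ℤ) : ℝ) := by
    push_cast; ring
  rw [hbase, hexp, Real.rpow_intCast, Nat.mul_div_cancel_left Q (by norm_num)]
  exact factorial_add_div_factorial_le di Q Di hQ

theorem stmt1 (D Di di : ℕ) (hDi : 1 ≤ Di) (hD : 4 ≤ D) (hD4 : 4 ∣ D) :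
    ((Di + di).factorial : ℝ) / (Di.factorial : ℝ) ≤
      (1 + 4 * (di : ℝ) / (D : ℝ)) ^ ((Di : ℝ) - (D : ℝ) / 4) *
        (((D / 4 + di).factorial : ℝ) / ((D / 4).factorial : ℝ)) :=
  stmt1_general D Di di hD hD4
end

section
/- For any positive integers $D \geq d$ with $d$ and $D$ divisible by 4, the ratio of multinomial coefficients $\frac{\binom{D}{D/4,D/4,D/4,D/4}}{\binom{D+d}{D/4+d/4,D/4+d/4,D/4+d/4,D/4+d/4}} = \frac{D!\,((D+d)/4)!^4}{(D+d)!\,(D/4)!^4}$ is at most $\left(\frac{D+d}{D}\right)^{3/2}$. -/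
lemma multinom_mono : ∀ j k : ℕ, j ≤ k →
    (4*j).factorial * k.factorial^4 ≤ (4*k).factorial * j.factorial^4 := by
  intro j k hjk
  induction k, hjk using Nat.le_induction with
  | base => rfl
  | succ k hk ih =>
    have h1 : (k+1)^4 ≤ (4*k+1)*(4*k+2)*(4*k+3)*(4*k+4) := by nlinarith [sq_nonneg k]
    have h2 : 4*(k+1) = (4*k+3)+1 := by ring
    calc (4*j).factorial * (k+1).factorial^4
        = (k+1)^4 * ((4*j).factorial * k.factorial^4) := by
          rw [Nat.factorial_succ]; ring
      _ ≤ (k+1)^4 * ((4*k).factorial * j.factorial^4) := by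
          exact Nat.mul_le_mul_left _ ih
      _ ≤ ((4*k+1)*(4*k+2)*(4*k+3)*(4*k+4)) * ((4*k).factorial * j.factorial^4) := by
          exact Nat.mul_le_mul_right _ h1
      _ = (4*(k+1)).factorial * j.factorial^4 := by
          rw [h2]
          rw [Nat.factorial_succ, Nat.factorial_succ, Nat.factorial_succ, Nat.factorial_succ]
          ring_nf

theorem stmt5 (D d : ℕ) (hd : 0 < d) (hdD : d ≤ D) (hD4 : 4 ∣ D) (hd4 : 4 ∣ d) :
    ((D.factorial : ℝ) * (((D + d) / 4).factorial : ℝ) ^ 4) /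
        (((D + d).factorial : ℝ) * ((D / 4).factorial : ℝ) ^ 4) ≤
      (((D : ℝ) + (d : ℝ)) / (D : ℝ)) ^ ((3 : ℝ) / 2) := by
  have hD : 0 < D := lt_of_lt_of_le hd hdD
  obtain ⟨j, rfl⟩ := hD4
  obtain ⟨e, rfl⟩ := hd4
  have hj4 : 4 * j / 4 = j := by omega
  have hje : (4 * j + 4 * e) / 4 = j + e := by omega
  rw [hj4, hje]
  have key : (4*j).factorial * (j+e).factorial^4 ≤ (4*(j+e)).factorial * j.factorial^4 := by
    have := multinom_mono j (j+e) (Nat.le_add_right _ _)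
    exact this
  have h4je : 4 * j + 4 * e = 4 * (j + e) := by ring
  have hle1 : ((4*j).factorial : ℝ) * ((j+e).factorial : ℝ)^4 /
      (((4*j+4*e).factorial : ℝ) * (j.factorial : ℝ)^4) ≤ 1 := by
    rw [div_le_one (by positivity)]
    rw [h4je]
    exact_mod_cast key
  have hbase : (1:ℝ) ≤ (((4*j:ℕ):ℝ) + ((4*e:ℕ):ℝ)) / ((4*j:ℕ):ℝ) := by
    rw [le_div_iff₀ (by positivity)]
    have : (0:ℝ) < ((4*e:ℕ):ℝ) := by positivity
    linarith
  calc ((4*j:ℕ).factorial : ℝ) * ((j+e).factorial : ℝ)^4 /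
        (((4*j+4*e:ℕ).factorial : ℝ) * (j.factorial : ℝ)^4) ≤ 1 := by exact_mod_cast hle1
    _ ≤ ((((4*j:ℕ):ℝ) + ((4*e:ℕ):ℝ)) / ((4*j:ℕ):ℝ)) ^ ((3:ℝ)/2) :=
        Real.one_le_rpow hbase (by norm_num)
end

section
/- For any real number $x$ and constant $c > 0$, if a twice-differentiable function $f : \mathbb{R} \to \mathbb{R}$ satisfies $f(0)=1$, $f'(0)=0$, and $f''(t) \leq c\, f(t)$ with $f(t) > 0$ for all $t$, then $f(x) \leq \cosh(\sqrt{c}\,x) \leq e^{cx^2/2}$. -/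
/-!
Compare `f` with the solution `g t = cosh (√c t)` of `g'' = c g` through the Wronskian
`W = f' g - f g'`. Since `W' = (f'' - c f) g ≤ 0` and `W 0 = 0`, the quotient `f / g`, whose
derivative is `W / g²`, increases up to `0` and decreases after it, so `f / g ≤ f 0 / g 0 = 1`.
-/

open Set

theorem isMaxOn_of_hasDerivAt_nonneg_of_nonpos {u u' : ℝ → ℝ} {a : ℝ}
    (hu : ∀ t, HasDerivAt u (u' t) t) (hleft : ∀ t < a, 0 ≤ u' t)
    (hright : ∀ t, a < t → u' t ≤ 0) : IsMaxOn u univ a := by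
  have hcont : Continuous u := continuous_iff_continuousAt.2 fun t => (hu t).continuousAt
  intro x _
  rcases le_total a x with hax | hxa
  · refine antitoneOn_of_hasDerivWithinAt_nonpos (convex_Ici a) hcont.continuousOn
      (fun t _ => (hu t).hasDerivWithinAt) (fun t ht => hright t ?_) self_mem_Ici hax hax
    rwa [interior_Ici] at ht
  · refine monotoneOn_of_hasDerivWithinAt_nonneg (convex_Iic a) hcont.continuousOn
      (fun t _ => (hu t).hasDerivWithinAt) (fun t ht => hleft t ?_) hxa self_mem_Iic hxa
    rwa [interior_Iic] at ht

section Wronskian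

variable {c : ℝ} {f f' f'' g g' : ℝ → ℝ}

theorem antitone_wronskian_of_second_deriv_le
    (hf : ∀ t, HasDerivAt f (f' t) t) (hf' : ∀ t, HasDerivAt f' (f'' t) t)
    (hg : ∀ t, HasDerivAt g (g' t) t) (hg' : ∀ t, HasDerivAt g' (c * g t) t)
    (hle : ∀ t, f'' t ≤ c * f t) (hg_nonneg : ∀ t, 0 ≤ g t) :
    Antitone fun t => f' t * g t - f t * g' t := by
  exact antitone_of_hasDerivAt_nonpos (f' := fun t => (f'' t - c * f t) * g t)
    (fun t => ((hf' t).mul (hg t)).sub ((hf t).mul (hg' t)) |>.congr_deriv (by ring))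
    fun t => mul_nonpos_of_nonpos_of_nonneg (sub_nonpos.2 (hle t)) (hg_nonneg t)

theorem div_le_div_of_second_deriv_le {a : ℝ}
    (hf : ∀ t, HasDerivAt f (f' t) t) (hf' : ∀ t, HasDerivAt f' (f'' t) t)
    (hg : ∀ t, HasDerivAt g (g' t) t) (hg' : ∀ t, HasDerivAt g' (c * g t) t)
    (hle : ∀ t, f'' t ≤ c * f t) (hg_pos : ∀ t, 0 < g t)
    (ha : f' a * g a = f a * g' a) (x : ℝ) :
    f x / g x ≤ f a / g a := by
  set W := fun t => f' t * g t - f t * g' t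
  have hW : Antitone W :=
    antitone_wronskian_of_second_deriv_le hf hf' hg hg' hle fun t => (hg_pos t).le
  have hWa : W a = 0 := sub_eq_zero.2 ha
  refine isMaxOn_of_hasDerivAt_nonneg_of_nonpos (u' := fun t => W t / g t ^ 2)
    (fun t => (hf t).div (hg t) (hg_pos t).ne') (fun t ht => ?_) (fun t ht => ?_) (mem_univ x)
  · exact div_nonneg (hWa ▸ hW ht.le) (sq_nonneg _)
  · exact div_nonpos_of_nonpos_of_nonneg (hWa ▸ hW ht.le) (sq_nonneg _)

end Wronskian

theorem stmt11_general (c : ℝ) (hc : 0 < c) (f f' f'' : ℝ → ℝ)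
    (hf : ∀ t, HasDerivAt f (f' t) t) (hf' : ∀ t, HasDerivAt f' (f'' t) t)
    (h0 : f 0 = 1) (h0' : f' 0 = 0) (hle : ∀ t, f'' t ≤ c * f t)
    (x : ℝ) :
    f x ≤ Real.cosh (Real.sqrt c * x) ∧
      Real.cosh (Real.sqrt c * x) ≤ Real.exp (c * x ^ 2 / 2) := by
  set s := Real.sqrt c
  have hs : s * s = c := Real.mul_self_sqrt hc.le
  have hg (t : ℝ) : HasDerivAt (fun t => Real.cosh (s * t)) (Real.sinh (s * t) * s) t := by
    simpa using ((hasDerivAt_id t).const_mul s).cosh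
  have hg' (t : ℝ) : HasDerivAt (fun t => Real.sinh (s * t) * s) (c * Real.cosh (s * t)) t := by
    refine (((hasDerivAt_id t).const_mul s).sinh.mul_const s).congr_deriv ?_
    rw [← hs]; simp only [id]; ring
  have hquot : f x / Real.cosh (s * x) ≤ f 0 / Real.cosh (s * 0) :=
    div_le_div_of_second_deriv_le hf hf' hg hg' hle (fun t => Real.cosh_pos _) (by simp [h0']) x
  rw [mul_zero, Real.cosh_zero, h0, div_one] at hquot
  refine ⟨(div_le_one (Real.cosh_pos _)).1 hquot, ?_⟩
  calc Real.cosh (s * x) ≤ Real.exp ((s * x) ^ 2 / 2) := Real.cosh_le_exp_half_sq _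
    _ = Real.exp (c * x ^ 2 / 2) := by rw [mul_pow, Real.sq_sqrt hc.le]

theorem stmt11 (c : ℝ) (hc : 0 < c) (f f' f'' : ℝ → ℝ)
    (hf : ∀ t, HasDerivAt f (f' t) t) (hf' : ∀ t, HasDerivAt f' (f'' t) t)
    (h0 : f 0 = 1) (h0' : f' 0 = 0) (hle : ∀ t, f'' t ≤ c * f t) (hpos : ∀ t, 0 < f t)
    (x : ℝ) :
    f x ≤ Real.cosh (Real.sqrt c * x) ∧
      Real.cosh (Real.sqrt c * x) ≤ Real.exp (c * x ^ 2 / 2) :=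
  stmt11_general c hc f f' f'' hf hf' h0 h0' hle x
end

section
/- Let $d$ be a positive integer and $\mathbf{x},\mathbf{y} \in \{0,1\}^d$ fixed. Pick $\mathbf{x}',\mathbf{y}'$ uniformly from $\{0,1\}^d$ and form $A = (\mathbf{x}+\mathbf{x}', \mathbf{x}', \mathbf{x}+\mathbf{x}', \mathbf{x}')$ and $B = (\mathbf{y}+\mathbf{y}', \mathbf{y}', \mathbf{y}', \mathbf{y}+\mathbf{y}')$ in $\{0,1\}^{4d}$ (additions mod 2). Let $d_1,d_2,d_3,d_4$ count the indices $j \in [4d]$ where $(A_j,B_j)$ equals $(0,0),(0,1),(1,0),(1,1)$ respectively. Then for any $s$ with $0 < s < 1/(24d)$, $\mathbb{E}\left[e^{s\sum_{i=1}^4 (d_i-d)^2}\right] \leq \left(\frac{1}{1-24ds}\right)^2$. -/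
/-!
Write `ε z = (-1) ^ z` and `[P]` for indicators. In each coordinate the four blocks of `(A, B)`
pair up as `{x + x', x'} × {y + y', y'}`, and `[x + x' = a] + [x' = a] = 1 + ε a [x = 0] ε x'`.
Hence `d_ab - d = ε a X + ε b Y + ε a ε b Z` for the Rademacher sums
`X = ∑ [x_j = 0] ε x'_j`, `Y = ∑ [y_j = 0] ε y'_j` and `Z = ∑ [x_j = 0] [y_j = 0] ε x'_j ε y'_j`
(a Rademacher sum in `y'` for each fixed `x'`), so that `∑ (d_ab - d) ^ 2 = 4 (X² + Y² + Z²)`.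
By AM-GM, `exp (4 s (X² + Y² + Z²))` is at most the mean of `exp (12 s X²)`, `exp (12 s Y²)`
and `exp (12 s Z²)`. Each of these has expectation at most `(1 - 24 d s) ^ (-1/2)` by the
sub-Gaussian bound `E exp (t S²) ≤ (1 - 2 t ∑ c_j²) ^ (-1/2)` for `S = ∑ c_j ε_j`: write
`exp (t S²)` as a Gaussian integral of `exp (2 √t S u)`, take the expectation inside and use
`cosh r ≤ exp (r² / 2)`.
-/

open Finset MeasureTheory Real

lemma ZMod.sum_univ_two {M : Type*} [AddCommMonoid M] (f : ZMod 2 → M) :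
    ∑ z, f z = f 0 + f 1 :=
  Fin.sum_univ_two f

lemma ZMod.eq_zero_or_eq_one (z : ZMod 2) : z = 0 ∨ z = 1 := by
  revert z; decide

noncomputable def pmOne (z : ZMod 2) : ℝ := if z = 0 then 1 else -1

@[simp] lemma pmOne_zero : pmOne 0 = 1 := if_pos rfl

@[simp] lemma pmOne_one : pmOne 1 = -1 := if_neg (by decide)

lemma pmOne_sq (z : ZMod 2) : pmOne z ^ 2 = 1 := by
  unfold pmOne; split_ifs <;> norm_num

noncomputable def signSum {ι : Type*} [Fintype ι] (c : ι → ℝ) (z : ι → ZMod 2) : ℝ :=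
  ∑ j, c j * pmOne (z j)

lemma exp_neg_sq_add_mul (b u : ℝ) :
    exp (-u ^ 2 + b * u) = exp (b ^ 2 / 4) * exp (-(u - b / 2) ^ 2) := by
  rw [← exp_add]; ring_nf

lemma integrable_exp_neg_sq_add_mul (b : ℝ) :
    Integrable fun u : ℝ => exp (-u ^ 2 + b * u) := by
  simp_rw [exp_neg_sq_add_mul]
  have h : Integrable fun u : ℝ => exp (-u ^ 2) := by
    simpa using integrable_exp_neg_mul_sq one_pos
  exact (h.comp_sub_right (b / 2)).const_mul _

lemma integral_exp_neg_sq_add_mul (b : ℝ) :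
    ∫ u : ℝ, exp (-u ^ 2 + b * u) = √π * exp (b ^ 2 / 4) := by
  simp_rw [exp_neg_sq_add_mul]
  rw [integral_const_mul, integral_sub_right_eq_self (fun u => exp (-u ^ 2)) (b / 2), mul_comm]
  simpa using integral_gaussian 1

lemma exp_mul_sq_eq_integral {t : ℝ} (ht : 0 ≤ t) (S : ℝ) :
    exp (t * S ^ 2) = (√π)⁻¹ * ∫ u : ℝ, exp (-u ^ 2 + 2 * √t * S * u) := by
  rw [integral_exp_neg_sq_add_mul, ← mul_assoc, inv_mul_cancel₀ (by positivity), one_mul]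
  congr 1
  rw [mul_pow, mul_pow, sq_sqrt ht]; ring

section Rademacher

variable {ι : Type*} [Fintype ι] [DecidableEq ι]

lemma sum_exp_signSum (a : ι → ℝ) :
    ∑ z : ι → ZMod 2, exp (signSum a z) = ∏ j, 2 * cosh (a j) := by
  have hpair : ∀ j, ∑ v : ZMod 2, exp (a j * pmOne v) = 2 * cosh (a j) := fun j => by
    rw [ZMod.sum_univ_two, cosh_eq, pmOne_zero, pmOne_one]
    ring_nf
  simp_rw [signSum, exp_sum, ← hpair, Fintype.prod_sum]

lemma sum_exp_signSum_le (a : ι → ℝ) :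
    ∑ z : ι → ZMod 2, exp (signSum a z)
      ≤ 2 ^ Fintype.card ι * exp ((∑ j, a j ^ 2) / 2) := by
  rw [sum_exp_signSum, sum_div, exp_sum, ← card_univ, ← prod_const, ← prod_mul_distrib]
  gcongr with j
  exact cosh_le_exp_half_sq (a j)

theorem sum_exp_mul_signSum_sq_le {c : ι → ℝ} {t v : ℝ} (ht : 0 ≤ t)
    (hc : ∑ j, c j ^ 2 ≤ v) (htv : 2 * t * v < 1) :
    ∑ z : ι → ZMod 2, exp (t * signSum c z ^ 2)
      ≤ 2 ^ Fintype.card ι / √(1 - 2 * t * v) := by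
  have hpoint : ∀ u : ℝ, ∑ z : ι → ZMod 2, exp (-u ^ 2 + 2 * √t * signSum c z * u)
      ≤ 2 ^ Fintype.card ι * exp (-(1 - 2 * t * v) * u ^ 2) := fun u => by
    have hsplit : ∀ z, exp (-u ^ 2 + 2 * √t * signSum c z * u)
        = exp (-u ^ 2) * exp (signSum (fun j => 2 * √t * u * c j) z) := fun z => by
      rw [← exp_add]
      simp only [signSum, mul_sum, sum_mul]
      exact congrArg _ (congrArg _ (sum_congr rfl fun j _ => by ring))
    have hvar : (∑ j, (2 * √t * u * c j) ^ 2) / 2 ≤ 2 * t * u ^ 2 * v := by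
      simp_rw [mul_pow, sq_sqrt ht, ← mul_sum]
      nlinarith [mul_nonneg ht (sq_nonneg u)]
    calc ∑ z : ι → ZMod 2, exp (-u ^ 2 + 2 * √t * signSum c z * u)
        = exp (-u ^ 2) * ∑ z : ι → ZMod 2, exp (signSum (fun j => 2 * √t * u * c j) z) := by
          simp_rw [hsplit, mul_sum]
      _ ≤ exp (-u ^ 2) * (2 ^ Fintype.card ι * exp (2 * t * u ^ 2 * v)) := by
          gcongr
          exact (sum_exp_signSum_le _).trans (by gcongr)
      _ = 2 ^ Fintype.card ι * exp (-(1 - 2 * t * v) * u ^ 2) := by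
          rw [mul_left_comm, ← exp_add]; ring_nf
  have hint : Integrable fun u : ℝ =>
      ∑ z : ι → ZMod 2, exp (-u ^ 2 + 2 * √t * signSum c z * u) :=
    integrable_finsetSum _ fun z _ => integrable_exp_neg_sq_add_mul _
  calc ∑ z : ι → ZMod 2, exp (t * signSum c z ^ 2)
      = (√π)⁻¹ * ∫ u : ℝ, ∑ z : ι → ZMod 2, exp (-u ^ 2 + 2 * √t * signSum c z * u) := by
        rw [integral_finsetSum _ fun z _ => integrable_exp_neg_sq_add_mul _, mul_sum]
        simp_rw [exp_mul_sq_eq_integral ht]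
    _ ≤ (√π)⁻¹ * ∫ u : ℝ, 2 ^ Fintype.card ι * exp (-(1 - 2 * t * v) * u ^ 2) := by
        refine mul_le_mul_of_nonneg_left ?_ (by positivity)
        exact integral_mono hint
          ((integrable_exp_neg_mul_sq (by linarith)).const_mul _) hpoint
    _ = 2 ^ Fintype.card ι / √(1 - 2 * t * v) := by
        rw [integral_const_mul, integral_gaussian, sqrt_div pi_pos.le]
        field_simp

theorem sum_exp_mul_signSum_sq_le_of_sq_le_one {c : ι → ℝ} {t : ℝ} (ht : 0 ≤ t)
    (hc : ∀ j, c j ^ 2 ≤ 1) (htn : 2 * t * Fintype.card ι < 1) :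
    ∑ z : ι → ZMod 2, exp (t * signSum c z ^ 2)
      ≤ 2 ^ Fintype.card ι / √(1 - 2 * t * Fintype.card ι) :=
  sum_exp_mul_signSum_sq_le ht ((sum_le_sum fun j _ => hc j).trans_eq (by simp)) htn

end Rademacher

noncomputable def zeroInd (p : ZMod 2) : ℝ := if p = 0 then 1 else 0

lemma zeroInd_sq_le_one (p : ZMod 2) : zeroInd p ^ 2 ≤ 1 := by
  unfold zeroInd; split_ifs <;> norm_num

lemma indicator_add_indicator_eq (p u a : ZMod 2) :
    (if p + u = a then 1 else 0 : ℝ) + (if u = a then 1 else 0)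
      = 1 + pmOne a * (zeroInd p * pmOne u) := by
  obtain rfl | rfl := ZMod.eq_zero_or_eq_one p <;>
    obtain rfl | rfl := ZMod.eq_zero_or_eq_one u <;>
    obtain rfl | rfl := ZMod.eq_zero_or_eq_one a <;>
    simp (config := { decide := true }) [zeroInd]

lemma sum_fin_four_indicator_eq (p q u v a b : ZMod 2) :
    ∑ k : Fin 4, (if (if k = 1 ∨ k = 3 then u else p + u) = a ∧
        (if k = 1 ∨ k = 2 then v else q + v) = b then 1 else 0 : ℝ)
      = (1 + pmOne a * (zeroInd p * pmOne u)) * (1 + pmOne b * (zeroInd q * pmOne v)) := by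
  rw [← indicator_add_indicator_eq, ← indicator_add_indicator_eq, Fin.sum_univ_four]
  simp (config := { decide := true }) only [if_true, if_false]
  simp only [add_mul, mul_add, ite_zero_mul_ite_zero, mul_one]
  ring

lemma card_filter_sub_eq {d : ℕ} (x y x' y' : Fin d → ZMod 2) (a b : ZMod 2) :
    ((Finset.univ.filter (fun kj : Fin 4 × Fin d =>
        (if kj.1 = 1 ∨ kj.1 = 3 then x' kj.2 else x kj.2 + x' kj.2) = a ∧
        (if kj.1 = 1 ∨ kj.1 = 2 then y' kj.2 else y kj.2 + y' kj.2) = b)).card : ℝ) - d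
      = pmOne a * signSum (fun j => zeroInd (x j)) x'
        + pmOne b * signSum (fun j => zeroInd (y j)) y'
        + pmOne a * pmOne b *
          signSum (fun j => zeroInd (x j) * pmOne (x' j) * zeroInd (y j)) y' := by
  rw [card_filter, Nat.cast_sum, Fintype.sum_prod_type_right]
  simp only [Nat.cast_ite, Nat.cast_one, Nat.cast_zero, sum_fin_four_indicator_eq, signSum,
    mul_sum]
  rw [show (d : ℝ) = ∑ _j : Fin d, (1 : ℝ) by simp, ← sum_sub_distrib, ← sum_add_distrib,
    ← sum_add_distrib]
  exact sum_congr rfl fun j _ => by ring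

lemma sum_sq_pmOne_mul_add (X Y Z : ℝ) :
    ∑ a : ZMod 2, ∑ b : ZMod 2, (pmOne a * X + pmOne b * Y + pmOne a * pmOne b * Z) ^ 2
      = 4 * (X ^ 2 + Y ^ 2 + Z ^ 2) := by
  simp only [ZMod.sum_univ_two, pmOne_zero, pmOne_one]
  ring

lemma exp_add_add_le (a b c : ℝ) :
    exp (a + b + c) ≤ (exp (3 * a) + exp (3 * b) + exp (3 * c)) / 3 := by
  have hcube : ∀ r : ℝ, exp (3 * r) = exp r ^ 3 := fun r => by
    rw [← exp_nat_mul]; norm_num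
  rw [exp_add, exp_add, hcube, hcube, hcube]
  nlinarith [mul_nonneg (add_nonneg (add_nonneg (exp_pos a).le (exp_pos b).le) (exp_pos c).le)
    (add_nonneg (add_nonneg (sq_nonneg (exp a - exp b)) (sq_nonneg (exp b - exp c)))
      (sq_nonneg (exp c - exp a)))]

lemma exp_mul_sum_sq_card_filter_sub_le {d : ℕ} (s : ℝ) (x y x' y' : Fin d → ZMod 2) :
    exp (s * ∑ a : ZMod 2, ∑ b : ZMod 2,
      (((Finset.univ.filter (fun kj : Fin 4 × Fin d =>
        (if kj.1 = 1 ∨ kj.1 = 3 then x' kj.2 else x kj.2 + x' kj.2) = a ∧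
        (if kj.1 = 1 ∨ kj.1 = 2 then y' kj.2 else y kj.2 + y' kj.2) = b)).card : ℝ) - d) ^ 2)
      ≤ (exp (12 * s * signSum (fun j => zeroInd (x j)) x' ^ 2)
        + exp (12 * s * signSum (fun j => zeroInd (y j)) y' ^ 2)
        + exp (12 * s *
          signSum (fun j => zeroInd (x j) * pmOne (x' j) * zeroInd (y j)) y' ^ 2)) / 3 := by
  simp only [card_filter_sub_eq, sum_sq_pmOne_mul_add]
  set X := signSum (fun j => zeroInd (x j)) x'
  set Y := signSum (fun j => zeroInd (y j)) y'
  set Z := signSum (fun j => zeroInd (x j) * pmOne (x' j) * zeroInd (y j)) y'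
  calc exp (s * (4 * (X ^ 2 + Y ^ 2 + Z ^ 2)))
      = exp (4 * s * X ^ 2 + 4 * s * Y ^ 2 + 4 * s * Z ^ 2) := by ring_nf
    _ ≤ _ := exp_add_add_le _ _ _
    _ = _ := by ring_nf

lemma one_div_sqrt_le_one_div_sq {r : ℝ} (h0 : 0 < r) (h1 : r ≤ 1) :
    1 / √r ≤ (1 / r) ^ 2 := by
  have hr : r ^ 2 ≤ √r :=
    (by nlinarith : r ^ 2 ≤ r).trans ((le_sqrt h0.le h0.le).2 (by nlinarith))
  rw [div_pow, one_pow]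
  exact one_div_le_one_div_of_le (by positivity) hr

lemma sum_sum_exp_mul_sq_signSum_le {d : ℕ} (x y : Fin d → ZMod 2) {s : ℝ} (hs : 0 ≤ s)
    (hds : 24 * (d : ℝ) * s < 1) :
    ∑ x' : Fin d → ZMod 2, ∑ y' : Fin d → ZMod 2,
      (exp (12 * s * signSum (fun j => zeroInd (x j)) x' ^ 2)
        + exp (12 * s * signSum (fun j => zeroInd (y j)) y' ^ 2)
        + exp (12 * s *
          signSum (fun j => zeroInd (x j) * pmOne (x' j) * zeroInd (y j)) y' ^ 2)) / 3
      ≤ 2 ^ d * (2 ^ d / √(1 - 24 * d * s)) := by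
  have hM : ∀ c : Fin d → ℝ, (∀ j, c j ^ 2 ≤ 1) →
      ∑ z : Fin d → ZMod 2, exp (12 * s * signSum c z ^ 2) ≤ 2 ^ d / √(1 - 24 * d * s) :=
    fun c hc => by
      have h := sum_exp_mul_signSum_sq_le_of_sq_le_one (t := 12 * s) (by positivity) hc
        (by rw [Fintype.card_fin]; linarith)
      rwa [Fintype.card_fin, show 2 * (12 * s) * (d : ℝ) = 24 * d * s by ring] at h
  have hX := sum_le_card_nsmul univ _ _ fun (_ : Fin d → ZMod 2) _ =>
    hM _ fun j => zeroInd_sq_le_one (x j)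
  have hY := sum_le_card_nsmul univ _ _ fun (_ : Fin d → ZMod 2) _ =>
    hM _ fun j => zeroInd_sq_le_one (y j)
  have hZ := sum_le_card_nsmul univ _ _ fun (x' : Fin d → ZMod 2) _ =>
    hM (fun j => zeroInd (x j) * pmOne (x' j) * zeroInd (y j)) fun j => by
      simpa [mul_pow, pmOne_sq] using
        mul_le_one₀ (zeroInd_sq_le_one (x j)) (sq_nonneg _) (zeroInd_sq_le_one (y j))
  rw [sum_comm] at hX
  simp only [card_univ, Fintype.card_fun, ZMod.card, Fintype.card_fin, nsmul_eq_mul,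
    Nat.cast_pow, Nat.cast_ofNat] at hX hY hZ
  simp only [← sum_div, sum_add_distrib]
  linarith

theorem stmt13_general (d : ℕ) (x y : Fin d → ZMod 2) (s : ℝ) (hs0 : 0 < s)
    (hs : s < 1 / (24 * d)) :
    (1 / ((2 : ℝ) ^ d * 2 ^ d)) *
        ∑ x' : Fin d → ZMod 2, ∑ y' : Fin d → ZMod 2,
          Real.exp (s * ∑ a : ZMod 2, ∑ b : ZMod 2,
            (((Finset.univ.filter (fun kj : Fin 4 × Fin d =>
                  (if kj.1 = 1 ∨ kj.1 = 3 then x' kj.2 else x kj.2 + x' kj.2) = a ∧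
                  (if kj.1 = 1 ∨ kj.1 = 2 then y' kj.2 else y kj.2 + y' kj.2) = b)).card : ℝ)
              - (d : ℝ)) ^ 2)
      ≤ (1 / (1 - 24 * (d : ℝ) * s)) ^ 2 := by
  have hds : 24 * (d : ℝ) * s < 1 := by
    rcases Nat.eq_zero_or_pos d with rfl | hd
    · simp
    · rw [lt_div_iff₀ (by positivity)] at hs; linarith
  calc _ ≤ 1 / ((2 : ℝ) ^ d * 2 ^ d) * (2 ^ d * (2 ^ d / √(1 - 24 * d * s))) := by
        gcongr
        refine (sum_le_sum fun x' _ => sum_le_sum fun y' _ => ?_).trans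
          (sum_sum_exp_mul_sq_signSum_le x y hs0.le hds)
        exact exp_mul_sum_sq_card_filter_sub_le s x y x' y'
    _ = 1 / √(1 - 24 * d * s) := by
        field_simp
    _ ≤ (1 / (1 - 24 * (d : ℝ) * s)) ^ 2 :=
        one_div_sqrt_le_one_div_sq (by linarith) (by nlinarith)

theorem stmt13 (d : ℕ) (hd : 0 < d) (x y : Fin d → ZMod 2) (s : ℝ) (hs0 : 0 < s)
    (hs : s < 1 / (24 * d)) :
    (1 / ((2 : ℝ) ^ d * 2 ^ d)) *
        ∑ x' : Fin d → ZMod 2, ∑ y' : Fin d → ZMod 2,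
          Real.exp (s * ∑ a : ZMod 2, ∑ b : ZMod 2,
            (((Finset.univ.filter (fun kj : Fin 4 × Fin d =>
                  (if kj.1 = 1 ∨ kj.1 = 3 then x' kj.2 else x kj.2 + x' kj.2) = a ∧
                  (if kj.1 = 1 ∨ kj.1 = 2 then y' kj.2 else y kj.2 + y' kj.2) = b)).card : ℝ)
              - (d : ℝ)) ^ 2)
      ≤ (1 / (1 - 24 * (d : ℝ) * s)) ^ 2 :=
  stmt13_general d x y s hs0 hs
end

section
/- Define $g_1(z) = 0$ for $z \leq 5$, $g_1(z) = z-5$ for $5 < z < 6$, $g_1(z) = 1$ for $z \geq 6$; and define $g_2(z) = z \bmod 1$ if $\lfloor z \rfloor$ is even and $g_2(z) = 1-(z \bmod 1)$ if $\lfloor z \rfloor$ is odd. Then for all $\mathbf{x},\mathbf{y} \in ([0,1/4] \cup [3/4,1])^d$, we have $g_2\left(\sum_{i=1}^d g_1(4x_i + 4y_i)\right) = \langle \mathrm{round}(\mathbf{x}), \mathrm{round}(\mathbf{y})\rangle \bmod 2$, where $\mathrm{round}$ rounds each coordinate to the nearest integer (so to $0$ on $[0,1/4]$ and $1$ on $[3/4,1]$).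 Moreover $g_1$ and $g_2$ are $1$-Lipschitz. -/
noncomputable def g1 (z : ℝ) : ℝ :=
  if z ≤ 5 then 0 else if z < 6 then z - 5 else 1

noncomputable def g2 (z : ℝ) : ℝ :=
  if Even ⌊z⌋ then Int.fract z else 1 - Int.fract z

lemma g1_lip : LipschitzWith 1 g1 := by
  rw [lipschitzWith_iff_dist_le_mul]
  intro a b
  simp only [NNReal.coe_one, one_mul, Real.dist_eq]
  unfold g1
  rcases abs_cases (a - b) with ⟨h1, h2⟩ | ⟨h1, h2⟩ <;>
    rw [abs_sub_le_iff] <;> split_ifs <;> constructor <;> linarith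

lemma g2_mem (z : ℝ) : 0 ≤ g2 z ∧ g2 z ≤ 1 := by
  have h1 := Int.fract_nonneg z
  have h2 := (Int.fract_lt_one z).le
  unfold g2; split_ifs <;> constructor <;> linarith

lemma g2_lip : LipschitzWith 1 g2 := by
  rw [lipschitzWith_iff_dist_le_mul]
  have key : ∀ a b : ℝ, a ≤ b → |g2 b - g2 a| ≤ b - a := by
    intro a b hab
    rcases le_or_gt 1 (b - a) with h | h
    · have ha := g2_mem a; have hb := g2_mem b
      rw [abs_le]; constructor <;> linarith [ha.1, ha.2, hb.1, hb.2]
    · have hfa : (⌊a⌋ : ℝ) ≤ a := Int.floor_le a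
      have hfa' : a < ⌊a⌋ + 1 := Int.lt_floor_add_one a
      have hfb : (⌊b⌋ : ℝ) ≤ b := Int.floor_le b
      have hfb' : b < ⌊b⌋ + 1 := Int.lt_floor_add_one b
      have hle : ⌊a⌋ ≤ ⌊b⌋ := Int.floor_le_floor hab
      have hlt : ⌊b⌋ ≤ ⌊a⌋ + 1 := by
        have h2 : (⌊b⌋ : ℝ) < (⌊a⌋ : ℝ) + 2 := by linarith
        have h3 : ⌊b⌋ < ⌊a⌋ + 2 := by exact_mod_cast h2
        omega
      have hfra : Int.fract a = a - ⌊a⌋ := rfl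
      have hfrb : Int.fract b = b - ⌊b⌋ := rfl
      rcases eq_or_lt_of_le hle with heq | hlt2
      · -- same floor
        unfold g2
        rw [← heq]
        split_ifs <;> rw [hfra, hfrb, abs_le, ← heq] <;> constructor <;> linarith
      · have heq : ⌊b⌋ = ⌊a⌋ + 1 := by omega
        have hcast : (⌊b⌋ : ℝ) = (⌊a⌋ : ℝ) + 1 := by exact_mod_cast heq
        have hpar : Even ⌊b⌋ ↔ ¬ Even ⌊a⌋ := by
          rw [heq, Int.even_add_one]
        unfold g2
        rcases Classical.em (Even ⌊a⌋) with he | he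
        · rw [if_pos he, if_neg (by rw [hpar]; exact fun h' => h' he)]
          rw [hfra, hfrb, abs_le]; constructor <;> linarith
        · rw [if_neg he, if_pos (hpar.mpr he)]
          rw [hfra, hfrb, abs_le]; constructor <;> linarith
  intro a b
  simp only [NNReal.coe_one, one_mul, Real.dist_eq]
  rcases le_total a b with h | h
  · rw [abs_sub_comm a b, abs_of_nonneg (by linarith : (0:ℝ) ≤ b - a)]
    exact abs_sub_comm (g2 a) (g2 b) ▸ key a b h
  · rw [abs_of_nonneg (by linarith : (0:ℝ) ≤ a - b)]
    exact key b a h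

lemma round_low {x : ℝ} (h : x ∈ Set.Icc (0:ℝ) (1/4)) : round x = 0 := by
  rw [round_eq, Int.floor_eq_zero_iff]
  constructor
  · linarith [h.1]
  · linarith [h.2]

lemma round_high {x : ℝ} (h : x ∈ Set.Icc (3/4:ℝ) 1) : round x = 1 := by
  rw [round_eq]
  have : ⌊x + 1/2⌋ = 1 := by
    apply Int.floor_eq_iff.mpr
    constructor <;> [push_cast; push_cast] <;> linarith [h.1, h.2]
  exact this

lemma g1_eq {x y : ℝ} (hx : x ∈ Set.Icc (0:ℝ) (1/4) ∪ Set.Icc (3/4) 1)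
    (hy : y ∈ Set.Icc (0:ℝ) (1/4) ∪ Set.Icc (3/4) 1) :
    g1 (4 * x + 4 * y) = ((round x * round y : ℤ) : ℝ) := by
  unfold g1
  rcases hx with hx | hx <;> rcases hy with hy | hy
  · rw [round_low hx, round_low hy, if_pos (by linarith [hx.2, hy.2])]; norm_num
  · rw [round_low hx, round_high hy, if_pos (by linarith [hx.2, hy.2])]; norm_num
  · rw [round_high hx, round_low hy, if_pos (by linarith [hx.2, hy.2])]; norm_num
  · rw [round_high hx, round_high hy, if_neg (by push_neg; linarith [hx.1, hy.1]),
      if_neg (by push_neg; linarith [hx.1, hy.1])]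
    norm_num

lemma g2_int (n : ℤ) : g2 ((n : ℝ)) = ((n % 2 : ℤ) : ℝ) := by
  unfold g2
  rw [Int.floor_intCast, Int.fract_intCast]
  rcases Int.even_or_odd n with he | ho
  · rw [if_pos he, Int.even_iff.mp he]; norm_num
  · rw [if_neg ((Int.not_even_iff_odd.mpr ho)), Int.odd_iff.mp ho]; norm_num

theorem stmt19 (d : ℕ) (x y : Fin d → ℝ)
    (hx : ∀ i, x i ∈ Set.Icc (0 : ℝ) (1 / 4) ∪ Set.Icc (3 / 4) 1)
    (hy : ∀ i, y i ∈ Set.Icc (0 : ℝ) (1 / 4) ∪ Set.Icc (3 / 4) 1) :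
    g2 (∑ i, g1 (4 * x i + 4 * y i)) =
        (((∑ i, round (x i) * round (y i)) % 2 : ℤ) : ℝ) ∧
      LipschitzWith 1 g1 ∧ LipschitzWith 1 g2 := by
  refine ⟨?_, g1_lip, g2_lip⟩
  have hsum : ∑ i, g1 (4 * x i + 4 * y i)
      = (((∑ i, round (x i) * round (y i) : ℤ)) : ℝ) := by
    push_cast
    exact Finset.sum_congr rfl fun i _ => by
      rw [g1_eq (hx i) (hy i)]; push_cast; ring
  rw [hsum, g2_int]
end
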